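/- arXiv:2310.20032 — 2 statements merged into one kernel-verified Lean document; each statement's English description precedes it below -/
import Mathlib

section
/- Fix a real c ≥ 0. The following are equivalent: (1) for every ε > 0 there exists N such that for all integers n ≥ N, R(n) ≤ n^{1/2} + (c/2 + ε)·n^{1/4} (i.e. R(n) ≤ n^{1/2} + (c/2)n^{1/4} + o(n^{1/4})); (2) for every ε > 0 there exists K such that every finite Sidon set A of integers with k := |A| ≥ K satisfies diam(A) ≥ k² − (c + ε)·k^{3/2} (i.e. diam(A) ≥ k² − c·k^{3/2} − o(k^{3/2})). -/
open scoped Classical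

noncomputable section

/-- A finite set of integers is a Sidon set if all nontrivial solutions to
`a - b = c - d` are excluded. -/
def IsSidon (A : Finset ℤ) : Prop :=
  ∀ a ∈ A, ∀ b ∈ A, ∀ c ∈ A, ∀ d ∈ A, a - b = c - d → (a = b ∧ c = d) ∨ (a = c ∧ b = d)

/-- The minimum of a finite set of integers (junk value `0` for `∅`). -/
def Amin (A : Finset ℤ) : ℤ := A.min.getD 0

/-- The maximum of a finite set of integers (junk value `0` for `∅`). -/
def Amax (A : Finset ℤ) : ℤ := A.max.getD 0

/-- The diameter `max A - min A` of a finite set of integers. -/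
def diam (A : Finset ℤ) : ℤ := Amax A - Amin A

/-- `A_i^{(T)}`, the number of elements of `A` in the window `[i - T, i)`. -/
def wc (A : Finset ℤ) (T i : ℤ) : ℕ := (A.filter (fun a => i - T ≤ a ∧ a < i)).card

/-- `Ā(A,T) = |A|·T/(T + diam A)`. -/
def Abar (A : Finset ℤ) (T : ℤ) : ℚ := ((A.card : ℚ) * (T : ℚ)) / ((T : ℚ) + (diam A : ℚ))

/-- `V(A,T)`, the total squared deviation of the window counts from `Ā(A,T)`. -/
def V (A : Finset ℤ) (T : ℤ) : ℚ :=
  ∑ i ∈ Finset.Icc (Amin A + 1) (Amax A + T), ((wc A T i : ℚ) - Abar A T) ^ 2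

/-- `S(A,T) = Σ (T - r)` over `1 ≤ r ≤ T - 1` not of the form `a - b` with `a, b ∈ A`. -/
def S (A : Finset ℤ) (T : ℤ) : ℤ :=
  ∑ r ∈ Finset.Icc 1 (T - 1), if ∃ a ∈ A, ∃ b ∈ A, a - b = r then 0 else T - r

/-- `R(n)`: the maximum cardinality of a Sidon set contained in `[0, n)`. -/
def R (n : ℕ) : ℕ :=
  sSup {k : ℕ | ∃ A : Finset ℤ, IsSidon A ∧ A ⊆ Finset.Ico 0 (n : ℤ) ∧ A.card = k}

lemma Amin_mem {A : Finset ℤ} (h : A.Nonempty) : Amin A ∈ A := by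
  obtain ⟨m, hm⟩ := Finset.min_of_nonempty h
  have h1 : Amin A = m := by rw [Amin, hm]; rfl
  rw [h1]; exact Finset.mem_of_min hm

lemma Amax_mem {A : Finset ℤ} (h : A.Nonempty) : Amax A ∈ A := by
  obtain ⟨m, hm⟩ := Finset.max_of_nonempty h
  have h1 : Amax A = m := by rw [Amax, hm]; rfl
  rw [h1]; exact Finset.mem_of_max hm

lemma Amin_le {A : Finset ℤ} {a : ℤ} (ha : a ∈ A) : Amin A ≤ a := by
  obtain ⟨m, hm⟩ := Finset.min_of_nonempty ⟨a, ha⟩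
  have h1 : Amin A = m := by rw [Amin, hm]; rfl
  have h2 := Finset.min_le ha
  rw [hm] at h2
  rw [h1]; exact_mod_cast h2

lemma le_Amax {A : Finset ℤ} {a : ℤ} (ha : a ∈ A) : a ≤ Amax A := by
  obtain ⟨m, hm⟩ := Finset.max_of_nonempty ⟨a, ha⟩
  have h1 : Amax A = m := by rw [Amax, hm]; rfl
  have h2 := Finset.le_max ha
  rw [hm] at h2
  rw [h1]; exact_mod_cast h2

lemma diam_nonneg {A : Finset ℤ} (h : A.Nonempty) : 0 ≤ diam A := by
  have := Amin_le (Amax_mem h); unfold diam; omega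

lemma card_le_diam {A : Finset ℤ} (h : A.Nonempty) : (A.card : ℤ) ≤ diam A + 1 := by
  have hsub : A ⊆ Finset.Icc (Amin A) (Amax A) := fun a ha =>
    Finset.mem_Icc.mpr ⟨Amin_le ha, le_Amax ha⟩
  have h2 := Finset.card_le_card hsub
  have hc : (Finset.Icc (Amin A) (Amax A)).card = (Amax A + 1 - Amin A).toNat := Int.card_Icc _ _
  have h3 : (A.card : ℤ) ≤ ((Amax A + 1 - Amin A).toNat : ℤ) := by
    rw [← hc]; exact_mod_cast h2
  have h4 := Amin_le (Amax_mem h)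
  unfold diam
  omega

lemma isSidon_translate {A : Finset ℤ} (hA : IsSidon A) (m : ℤ) :
    IsSidon (A.image (fun a => a + m)) := by
  intro a ha b hb c hc d hd habcd
  simp only [Finset.mem_image] at ha hb hc hd
  obtain ⟨a', ha', rfl⟩ := ha
  obtain ⟨b', hb', rfl⟩ := hb
  obtain ⟨c', hc', rfl⟩ := hc
  obtain ⟨d', hd', rfl⟩ := hd
  rcases hA a' ha' b' hb' c' hc' d' hd' (by linarith) with ⟨h1, h2⟩ | ⟨h1, h2⟩
  · left; omega
  · right; omega

lemma R_bddAbove (n : ℕ) :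
    ∀ k ∈ {k : ℕ | ∃ A : Finset ℤ, IsSidon A ∧ A ⊆ Finset.Ico 0 (n : ℤ) ∧ A.card = k}, k ≤ n := by
  rintro k ⟨B, -, hB, rfl⟩
  calc B.card ≤ (Finset.Ico (0:ℤ) n).card := Finset.card_le_card hB
  _ = n := by rw [Int.card_Ico]; simp

lemma le_R {n : ℕ} {A : Finset ℤ} (hA : IsSidon A) (hsub : A ⊆ Finset.Ico 0 (n:ℤ)) :
    A.card ≤ R n :=
  le_csSup ⟨n, R_bddAbove n⟩ ⟨A, hA, hsub, rfl⟩

lemma R_spec (n : ℕ) : ∃ A : Finset ℤ, IsSidon A ∧ A ⊆ Finset.Ico 0 (n:ℤ) ∧ A.card = R n := by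
  have hne : {k : ℕ | ∃ A : Finset ℤ, IsSidon A ∧ A ⊆ Finset.Ico 0 (n : ℤ) ∧ A.card = k}.Nonempty :=
    ⟨0, ∅, fun a ha => absurd ha (Finset.notMem_empty a), Finset.empty_subset _, rfl⟩
  exact Nat.sSup_mem hne ⟨n, R_bddAbove n⟩

lemma rpow_mul_nat (x : ℝ) (hx : 0 ≤ x) (p : ℝ) (m : ℕ) : (x ^ p) ^ m = x ^ (p * m) := by
  rw [← Real.rpow_natCast (x ^ p) m, ← Real.rpow_mul hx]


lemma key1 (E ε t u : ℝ) (hE : 0 < E) (hε : 0 < ε) (ht : 1 ≤ t) (htE : E ≤ t)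
    (htC : E*(3*E+3*E^2+E^3) ≤ ε*t) (hu : 0 ≤ u) (h : u^4 ≤ t^4 + E*u^3) :
    u^2 ≤ t^2 + (E/2+ε/2)*t := by
  have ht0 : (0:ℝ) < t := lt_of_lt_of_le one_pos ht
  rcases le_or_gt u t with h1 | h1
  · nlinarith [mul_pos hE ht0, mul_pos hε ht0]
  · have hu3t : t^3 ≤ u^3 := pow_le_pow_left₀ ht0.le h1.le 3
    have hu30 : (0:ℝ) < u^3 := pow_pos (lt_trans ht0 h1) 3
    have hut : u ≤ t + E := by
      by_contra hcon
      push_neg at hcon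
      have e1 : u^3*(u-E) ≤ t^4 := by nlinarith [h]
      have e2 : t^4 ≤ u^3*t := by nlinarith [mul_le_mul_of_nonneg_right hu3t ht0.le]
      nlinarith [mul_lt_mul_of_pos_left (show t < u - E by linarith) hu30]
    have h5 : u^3 ≤ (t+E)^3 := pow_le_pow_left₀ hu hut 3
    have a1 : t ≤ t^2 := by nlinarith
    have a2 : 1 ≤ t^2 := by nlinarith
    have a3 : (3*E^2+3*E^3+E^4)*t^2 ≤ ε*t^3 := by
      nlinarith [mul_le_mul_of_nonneg_right htC (sq_nonneg t)]
    have h6 : u^4 ≤ (t^2 + (E/2+ε/2)*t)^2 := by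
      nlinarith [mul_le_mul_of_nonneg_left h5 hE.le,
        mul_le_mul_of_nonneg_left a1 (by positivity : (0:ℝ) ≤ 3*E^3),
        mul_le_mul_of_nonneg_left a2 (by positivity : (0:ℝ) ≤ E^4),
        a3, sq_nonneg ((E+ε)/2 * t)]
    have hb : (0:ℝ) ≤ t^2 + (E/2+ε/2)*t := by positivity
    nlinarith [h6, sq_nonneg u, hu, hb]

lemma key2 (E' ε t u : ℝ) (hE' : 0 ≤ E') (hε : 0 < ε) (ht0 : 0 ≤ t) (hu0 : 0 ≤ u)
    (huE : E' ≤ u) (hu1 : 1 ≤ (ε/2) * u^3) (htu : t^4 ≤ u^4)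
    (hyp : u^2 ≤ t^2 + E'*t) :
    u^4 - (2*E' + ε/2)*u^3 ≤ t^4 - 1 := by
  have htu1 : t ≤ u := by
    by_contra hcon
    push_neg at hcon
    have := pow_lt_pow_left₀ hcon hu0 (by norm_num : 4 ≠ 0)
    linarith
  have h1 : u^2 - E'*u ≤ t^2 := by nlinarith [mul_le_mul_of_nonneg_left htu1 hE']
  have h2 : 0 ≤ u^2 - E'*u := by nlinarith [mul_le_mul_of_nonneg_left huE hu0]
  have h3 : (u^2 - E'*u)^2 ≤ (t^2)^2 := by nlinarith [h1, h2, sq_nonneg t]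
  nlinarith [sq_nonneg (E'*u), h3, mul_nonneg (mul_nonneg hu0 hu0) hu0]

set_option maxHeartbeats 1000000 in
lemma fwd_dir (c : ℝ) (hc : 0 ≤ c) :
    (∀ ε : ℝ, 0 < ε → ∃ N : ℕ, ∀ n : ℕ, N ≤ n → 1 ≤ n →
        (R n : ℝ) ≤ (n : ℝ) ^ ((1 : ℝ) / 2) + (c / 2 + ε) * (n : ℝ) ^ ((1 : ℝ) / 4)) →
    (∀ ε : ℝ, 0 < ε → ∃ K : ℕ, ∀ A : Finset ℤ, IsSidon A → K ≤ A.card →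
        (diam A : ℝ) ≥ (A.card : ℝ) ^ 2 - (c + ε) * (A.card : ℝ) ^ ((3 : ℝ) / 2)) := by
  intro h1 ε hε
  set E' : ℝ := c/2 + ε/4 with hE'def
  obtain ⟨N, hN⟩ := h1 (ε/4) (by positivity)
  refine ⟨N + 1 + Nat.ceil (E'^2) + Nat.ceil (2/ε), ?_⟩
  intro A hA hK
  have hk1 : 1 ≤ A.card := by omega
  have hAne : A.Nonempty := Finset.card_pos.mp (by omega)
  have hd0 : 0 ≤ diam A := diam_nonneg hAne
  have hcard : (A.card : ℤ) ≤ diam A + 1 := card_le_diam hAne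
  set n : ℕ := (diam A + 1).toNat with hndef
  have hnz : (n : ℤ) = diam A + 1 := Int.toNat_of_nonneg (by omega)
  have hkn : A.card ≤ n := by exact_mod_cast (hnz ▸ hcard : (A.card : ℤ) ≤ (n:ℤ))
  have hNn : N ≤ n := le_trans (by omega) hkn
  have h1n : 1 ≤ n := le_trans hk1 hkn
  -- translated Sidon set
  have hB : IsSidon (A.image (fun a => a + (-(Amin A)))) := isSidon_translate hA _
  have hBsub : (A.image (fun a => a + (-(Amin A)))) ⊆ Finset.Ico 0 (n : ℤ) := by
    intro x hx
    simp only [Finset.mem_image] at hx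
    obtain ⟨a, ha, rfl⟩ := hx
    have h5 := Amin_le ha
    have h6 := le_Amax ha
    have h7 : Amax A - Amin A = diam A := rfl
    rw [Finset.mem_Ico]
    omega
  have hcardB : (A.image (fun a => a + (-(Amin A)))).card = A.card :=
    Finset.card_image_of_injective _ (add_left_injective _)
  have hRn : A.card ≤ R n := hcardB ▸ le_R hB hBsub
  have hknum : (A.card : ℝ) ≤ (n : ℝ) ^ ((1 : ℝ) / 2) + E' * (n : ℝ) ^ ((1 : ℝ) / 4) :=
    le_trans (by exact_mod_cast hRn) (hN n hNn h1n)
  set u : ℝ := (A.card : ℝ) ^ ((1:ℝ)/2) with hudef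
  set t : ℝ := (n : ℝ) ^ ((1:ℝ)/4) with htdef
  have hu0 : 0 ≤ u := by positivity
  have ht0 : 0 ≤ t := by positivity
  have hu2 : u^2 = (A.card : ℝ) := by
    rw [hudef, rpow_mul_nat _ (by positivity)]; norm_num
  have hu3 : u^3 = (A.card : ℝ) ^ ((3:ℝ)/2) := by
    rw [hudef, rpow_mul_nat _ (by positivity)]; norm_num
  have hu4 : u^4 = (A.card : ℝ) ^ 2 := by
    rw [hudef, rpow_mul_nat _ (by positivity)]; norm_num
  have ht2 : t^2 = (n : ℝ) ^ ((1:ℝ)/2) := by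
    rw [htdef, rpow_mul_nat _ (by positivity)]; norm_num
  have ht4 : t^4 = (n : ℝ) := by
    rw [htdef, rpow_mul_nat _ (by positivity)]; norm_num
  have hE'0 : 0 ≤ E' := by positivity
  have hceil1 : E'^2 ≤ (A.card : ℝ) := by
    refine le_trans (Nat.le_ceil _) ?_
    exact_mod_cast (by omega : Nat.ceil (E'^2) ≤ A.card)
  have huE : E' ≤ u := by nlinarith [hu2, sq_nonneg (u + E'), sq_nonneg (u - E')]
  have hu_ge1 : 1 ≤ u := by
    have : (1:ℝ) ≤ (A.card : ℝ) := by exact_mod_cast hk1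
    nlinarith [hu2]
  have hu3k : (A.card : ℝ) ≤ u^3 := by nlinarith [hu2, hu_ge1, sq_nonneg u]
  have hceil2 : 2/ε ≤ (A.card : ℝ) := by
    refine le_trans (Nat.le_ceil _) ?_
    exact_mod_cast (by omega : Nat.ceil (2/ε) ≤ A.card)
  have hεk : 2 ≤ ε * (A.card : ℝ) := by
    rw [div_le_iff₀ hε] at hceil2; linarith
  have hu1 : 1 ≤ (ε/2) * u^3 := by
    have h9 := mul_le_mul_of_nonneg_left hu3k hε.le
    linarith
  by_cases hcase : diam A + 1 ≤ (A.card : ℤ)^2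
  · have htu : t^4 ≤ u^4 := by
      rw [ht4, hu4]
      have : ((n:ℤ) : ℝ) ≤ (((A.card : ℤ)^2 : ℤ) : ℝ) := by exact_mod_cast (hnz ▸ hcase)
      push_cast at this ⊢
      linarith
    have hyp : u^2 ≤ t^2 + E' * t := by
      rw [hu2, ht2]; exact hknum
    have hfin := key2 E' ε t u hE'0 hε ht0 hu0 huE hu1 htu hyp
    have hncast : ((n:ℕ) : ℝ) = (diam A : ℝ) + 1 := by exact_mod_cast hnz
    rw [ge_iff_le, ← hu4, ← hu3]
    have hconst : u^4 - (c+ε)*u^3 = u^4 - (2*E' + ε/2)*u^3 := by rw [hE'def]; ring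
    rw [← ht4] at hncast
    linarith [hfin, hconst]
  · push_neg at hcase
    have hik : (A.card : ℤ)^2 ≤ diam A := by linarith
    have hrk : ((A.card : ℝ))^2 ≤ (diam A : ℝ) := by exact_mod_cast hik
    have hpos : 0 ≤ (c+ε) * (A.card : ℝ) ^ ((3:ℝ)/2) := by positivity
    linarith

set_option maxHeartbeats 4000000 in
lemma bwd_dir (c : ℝ) (hc : 0 ≤ c) :
    (∀ ε : ℝ, 0 < ε → ∃ K : ℕ, ∀ A : Finset ℤ, IsSidon A → K ≤ A.card →
        (diam A : ℝ) ≥ (A.card : ℝ) ^ 2 - (c + ε) * (A.card : ℝ) ^ ((3 : ℝ) / 2)) →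
    (∀ ε : ℝ, 0 < ε → ∃ N : ℕ, ∀ n : ℕ, N ≤ n → 1 ≤ n →
        (R n : ℝ) ≤ (n : ℝ) ^ ((1 : ℝ) / 2) + (c / 2 + ε) * (n : ℝ) ^ ((1 : ℝ) / 4)) := by
  intro h2 ε hε
  set E : ℝ := c + ε with hEdef
  have hE0 : 0 < E := by positivity
  obtain ⟨K, hK⟩ := h2 ε hε
  set C : ℝ := E*(3*E+3*E^2+E^3) with hCdef
  set M : ℝ := max 1 (max E (C/ε)) with hMdef
  have hM0 : 0 ≤ M := le_trans zero_le_one (le_max_left _ _)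
  refine ⟨K^2 + Nat.ceil (M^4) + 1, ?_⟩
  intro n hn hn1
  obtain ⟨A, hA, hsub, hcard⟩ := R_spec n
  set t : ℝ := (n : ℝ) ^ ((1:ℝ)/4) with htdef
  have ht0 : 0 ≤ t := by positivity
  have ht2 : t^2 = (n : ℝ) ^ ((1:ℝ)/2) := by
    rw [htdef, rpow_mul_nat _ (by positivity)]; norm_num
  have ht4 : t^4 = (n : ℝ) := by
    rw [htdef, rpow_mul_nat _ (by positivity)]; norm_num
  have hMn : M^4 ≤ (n : ℝ) := by
    refine le_trans (Nat.le_ceil _) ?_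
    exact_mod_cast (by omega : Nat.ceil (M^4) ≤ n)
  have htM : M ≤ t := by
    by_contra hcon
    push_neg at hcon
    have := pow_lt_pow_left₀ hcon ht0 (by norm_num : 4 ≠ 0)
    rw [ht4] at this
    linarith
  have ht1 : 1 ≤ t := le_trans (le_max_left _ _) htM
  have htE : E ≤ t := le_trans (le_trans (le_max_left _ _) (le_max_right _ _)) htM
  have htC : C ≤ ε * t := by
    have h5 : C/ε ≤ t := le_trans (le_trans (le_max_right _ _) (le_max_right _ _)) htM
    rw [div_le_iff₀ hε] at h5; linarith
  rcases lt_or_ge A.card K with hlt | hge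
  · have hKn : ((K:ℝ))^2 ≤ (n : ℝ) := by exact_mod_cast (by omega : K^2 ≤ n)
    have hKt : (K : ℝ) ≤ t^2 := by nlinarith [ht4, sq_nonneg (t^2 - K), sq_nonneg (t^2 + K)]
    have hRlt : (R n : ℝ) < (K : ℝ) := by exact_mod_cast hcard ▸ hlt
    have hpos : 0 ≤ (c/2 + ε) * (n : ℝ) ^ ((1:ℝ)/4) := by positivity
    rw [← ht2]
    linarith
  · have hdiam := hK A hA hge
    rcases Finset.eq_empty_or_nonempty A with rfl | hne
    · rw [← hcard]
      simp only [Finset.card_empty, Nat.cast_zero]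
      positivity
    · have hmax := Finset.mem_Ico.mp (hsub (Amax_mem hne))
      have hmin := Finset.mem_Ico.mp (hsub (Amin_mem hne))
      have hdn : (diam A : ℝ) ≤ (n : ℝ) - 1 := by
        have : diam A ≤ (n : ℤ) - 1 := by unfold diam; omega
        exact_mod_cast this
      set u : ℝ := (A.card : ℝ) ^ ((1:ℝ)/2) with hudef
      have hu0 : 0 ≤ u := by positivity
      have hu2 : u^2 = (A.card : ℝ) := by
        rw [hudef, rpow_mul_nat _ (by positivity)]; norm_num
      have hu3 : u^3 = (A.card : ℝ) ^ ((3:ℝ)/2) := by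
        rw [hudef, rpow_mul_nat _ (by positivity)]; norm_num
      have hu4 : u^4 = (A.card : ℝ) ^ 2 := by
        rw [hudef, rpow_mul_nat _ (by positivity)]; norm_num
      have hh : u^4 ≤ t^4 + E * u^3 := by
        rw [hu4, hu3, ht4]; linarith [hdiam, hdn]
      have hfin := key1 E ε t u hE0 hε ht1 htE htC hu0 hh
      have hconst : E/2 + ε/2 = c/2 + ε := by rw [hEdef]; ring
      have hRA : (R n : ℝ) = u^2 := by rw [hu2]; exact_mod_cast hcard.symm
      rw [hconst] at hfin
      rw [← ht2, hRA]
      exact hfin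

/-- `R(n) ≤ n^{1/2} + (c/2)·n^{1/4} + o(n^{1/4})` iff every finite Sidon set
`A` with `k = |A|` satisfies `diam(A) ≥ k² − c·k^{3/2} − o(k^{3/2})`. -/
theorem R_littleo_iff_diam_littleo (c : ℝ) (hc : 0 ≤ c) :
    (∀ ε : ℝ, 0 < ε → ∃ N : ℕ, ∀ n : ℕ, N ≤ n → 1 ≤ n →
        (R n : ℝ) ≤ (n : ℝ) ^ ((1 : ℝ) / 2) + (c / 2 + ε) * (n : ℝ) ^ ((1 : ℝ) / 4)) ↔
    (∀ ε : ℝ, 0 < ε → ∃ K : ℕ, ∀ A : Finset ℤ, IsSidon A → K ≤ A.card →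
        (diam A : ℝ) ≥ (A.card : ℝ) ^ 2 - (c + ε) * (A.card : ℝ) ^ ((3 : ℝ) / 2)) :=
  ⟨fwd_dir c hc, bwd_dir c hc⟩
end
end

section
/- There exists a constant C ≥ 0 such that every finite nonempty Sidon set A of integers with k := |A| satisfies diam(A) ≥ k² − 2·k^{3/2} − C·k. -/
open scoped Classical

noncomputable section

lemma amin_mem {A : Finset ℤ} (hA : A.Nonempty) : Amin A ∈ A := by
  obtain ⟨m, hm⟩ := A.min_of_nonempty hA
  rw [Amin, hm]
  exact A.mem_of_min hm

lemma amax_mem {A : Finset ℤ} (hA : A.Nonempty) : Amax A ∈ A := by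
  obtain ⟨m, hm⟩ := A.max_of_nonempty hA
  rw [Amax, hm]
  exact A.mem_of_max hm

lemma amin_le {A : Finset ℤ} (hA : A.Nonempty) {a : ℤ} (ha : a ∈ A) : Amin A ≤ a := by
  obtain ⟨m, hm⟩ := A.min_of_nonempty hA
  rw [Amin, hm]
  have := Finset.min_le ha
  rw [hm] at this
  exact_mod_cast this

lemma le_amax {A : Finset ℤ} (hA : A.Nonempty) {a : ℤ} (ha : a ∈ A) : a ≤ Amax A := by
  obtain ⟨m, hm⟩ := A.max_of_nonempty hA
  rw [Amax, hm]
  have := Finset.le_max ha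
  rw [hm] at this
  exact_mod_cast this

open Finset in
lemma sum_wc (A : Finset ℤ) (hA : A.Nonempty) (T : ℤ) (hT : 1 ≤ T) :
    ∑ i ∈ Finset.Icc (Amin A + 1) (Amax A + T), (wc A T i : ℤ) = A.card * T := by
  have key : ∀ i, (wc A T i : ℤ) = ∑ a ∈ A, if i - T ≤ a ∧ a < i then (1:ℤ) else 0 := by
    intro i
    rw [wc, Finset.card_filter]
    push_cast
    rfl
  simp_rw [key]
  rw [Finset.sum_comm]
  have inner : ∀ a ∈ A, (∑ i ∈ Finset.Icc (Amin A + 1) (Amax A + T),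
      if i - T ≤ a ∧ a < i then (1:ℤ) else 0) = T := by
    intro a ha
    have h1 := amin_le hA ha
    have h2 := le_amax hA ha
    rw [← Finset.sum_filter]
    have hfil : (Finset.Icc (Amin A + 1) (Amax A + T)).filter
        (fun i => i - T ≤ a ∧ a < i) = Finset.Icc (a+1) (a+T) := by
      ext i
      simp only [Finset.mem_filter, Finset.mem_Icc]
      omega
    rw [hfil]
    simp only [Finset.sum_const, Int.card_Icc, nsmul_eq_mul, mul_one]
    omega
  rw [Finset.sum_congr rfl inner, Finset.sum_const, nsmul_eq_mul]
lemma fiber_card (T r : ℤ) :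
    ((Finset.Ico (0:ℤ) T ×ˢ Finset.Ico (0:ℤ) T).filter (fun p => p.1 - p.2 = r)).card
      = (T - |r|).toNat := by
  have himg : (Finset.Ico (0:ℤ) T ×ˢ Finset.Ico (0:ℤ) T).filter (fun p => p.1 - p.2 = r)
      = (Finset.Ico (max 0 r) (T + min 0 r)).image (fun x => (x, x - r)) := by
    ext p
    simp only [Finset.mem_filter, Finset.mem_product, Finset.mem_Ico, Finset.mem_image,
      Prod.ext_iff]
    constructor
    · rintro ⟨⟨⟨h1, h2⟩, h3, h4⟩, h5⟩
      exact ⟨p.1, by omega⟩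
    · rintro ⟨x, hx, rfl, h2⟩
      omega
  rw [himg, Finset.card_image_of_injective _ (fun x y h => by simpa using (Prod.ext_iff.1 h).1),
    Int.card_Ico]
  rcases abs_cases r with ⟨h1, h2⟩ | ⟨h1, h2⟩ <;> omega

lemma sum_h (T : ℤ) (hT : 1 ≤ T) :
    ∑ r ∈ Finset.Icc (1 - T) (T - 1), (((T - |r|).toNat : ℤ)) = T * T := by
  have hmem : ∀ p : ℤ × ℤ, p ∈ Finset.Ico (0:ℤ) T ×ˢ Finset.Ico (0:ℤ) T →
      p.1 - p.2 ∈ Finset.Icc (1 - T) (T - 1) := by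
    intro p hp
    simp only [Finset.mem_product, Finset.mem_Ico] at hp
    simp only [Finset.mem_Icc]
    omega
  have := Finset.card_eq_sum_card_fiberwise hmem
  have hcard : (Finset.Ico (0:ℤ) T ×ˢ Finset.Ico (0:ℤ) T).card = T.toNat * T.toNat := by
    rw [Finset.card_product, Int.card_Ico]
    simp
  rw [hcard] at this
  have : (T.toNat * T.toNat : ℤ) = ∑ r ∈ Finset.Icc (1 - T) (T - 1), (((T - |r|).toNat : ℤ)) := by
    rw_mod_cast [this]
    exact Finset.sum_congr rfl fun r _ => by rw [fiber_card]
  rw [← this]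
  have : (T.toNat : ℤ) = T := Int.toNat_of_nonneg (by omega)
  rw [this]
open Finset in
lemma sum_wc_sq (A : Finset ℤ) (hA : A.Nonempty) (hS : IsSidon A) (T : ℤ) (hT : 1 ≤ T) :
    ∑ i ∈ Finset.Icc (Amin A + 1) (Amax A + T), (wc A T i : ℤ) ^ 2
      ≤ A.card * T + T * T := by
  set I := Finset.Icc (Amin A + 1) (Amax A + T) with hI
  have key : ∀ i, (wc A T i : ℤ) ^ 2 = ∑ p ∈ A ×ˢ A,
      if (i - T ≤ p.1 ∧ p.1 < i) ∧ (i - T ≤ p.2 ∧ p.2 < i) then (1:ℤ) else 0 := by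
    intro i
    have h1 : (wc A T i : ℤ) = ∑ a ∈ A, if i - T ≤ a ∧ a < i then (1:ℤ) else 0 := by
      rw [wc, Finset.card_filter]; push_cast; rfl
    rw [sq, h1, Finset.sum_mul_sum, ← Finset.sum_product']
    refine Finset.sum_congr rfl fun p _ => ?_
    split_ifs with h1 h2 h3 <;> simp_all
  simp_rw [key]
  rw [Finset.sum_comm]
  have inner : ∀ p ∈ A ×ˢ A, (∑ i ∈ I,
      if (i - T ≤ p.1 ∧ p.1 < i) ∧ (i - T ≤ p.2 ∧ p.2 < i) then (1:ℤ) else 0)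
      = ((T - |p.1 - p.2|).toNat : ℤ) := by
    rintro ⟨a, b⟩ hp
    simp only [Finset.mem_product] at hp
    have h1 := amin_le hA hp.1
    have h2 := le_amax hA hp.1
    have h3 := amin_le hA hp.2
    have h4 := le_amax hA hp.2
    rw [← Finset.sum_filter]
    have hfil : I.filter (fun i => (i - T ≤ a ∧ a < i) ∧ (i - T ≤ b ∧ b < i))
        = Finset.Icc (max a b + 1) (min a b + T) := by
      ext i
      simp only [hI, Finset.mem_filter, Finset.mem_Icc]
      omega
    rw [hfil]
    simp only [Finset.sum_const, Int.card_Icc, nsmul_eq_mul, mul_one]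
    congr 1
    rcases abs_cases (a - b) with ⟨e1, e2⟩ | ⟨e1, e2⟩ <;>
      rcases le_total a b with h | h <;>
      · rw [e1]
        first
          | rw [min_eq_left h, max_eq_right h]
          | rw [min_eq_right h, max_eq_left h]
        omega
  rw [Finset.sum_congr rfl inner]
  rw [← Finset.sum_filter_add_sum_filter_not (A ×ˢ A) (fun p => p.1 = p.2)]
  have hdiag : ∑ p ∈ (A ×ˢ A).filter (fun p => p.1 = p.2),
      ((T - |p.1 - p.2|).toNat : ℤ) ≤ A.card * T := by
    have heq : ∀ p ∈ (A ×ˢ A).filter (fun p => p.1 = p.2),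
        ((T - |p.1 - p.2|).toNat : ℤ) = T := by
      rintro ⟨a, b⟩ hp
      simp only [Finset.mem_filter] at hp
      rcases hp with ⟨-, rfl⟩
      simp [Int.toNat_of_nonneg (by omega : (0:ℤ) ≤ T)]
    rw [Finset.sum_congr rfl heq, Finset.sum_const, nsmul_eq_mul]
    have hc : ((A ×ˢ A).filter (fun p => p.1 = p.2)).card ≤ A.card := by
      apply Finset.card_le_card_of_injOn (fun p => p.1)
      · rintro ⟨a, b⟩ hp
        simp only [Finset.mem_coe, Finset.mem_filter, Finset.mem_product] at hp
        exact hp.1.1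
      · rintro ⟨a, b⟩ hp ⟨c, d⟩ hq h
        simp only [Finset.coe_filter, Set.mem_setOf_eq, Finset.mem_product] at hp hq
        simp only at h
        subst h
        rw [Prod.ext_iff]
        exact ⟨rfl, hq.2 ▸ hp.2 ▸ rfl⟩
    exact mul_le_mul_of_nonneg_right (by exact_mod_cast hc) (by omega)
  have hoff : ∑ p ∈ (A ×ˢ A).filter (fun p => ¬ p.1 = p.2),
      ((T - |p.1 - p.2|).toNat : ℤ) ≤ T * T := by
    set s2 := (A ×ˢ A).filter (fun p => ¬ p.1 = p.2) with hs2
    have hinj : Set.InjOn (fun p : ℤ × ℤ => p.1 - p.2) s2 := by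
      rintro ⟨a, b⟩ hp ⟨c, d⟩ hq h
      simp only [hs2, Finset.coe_filter, Set.mem_setOf_eq, Finset.mem_product] at hp hq
      simp only at h
      rcases hS a hp.1.1 b hp.1.2 c hq.1.1 d hq.1.2 h with ⟨h1, h2⟩ | ⟨h1, h2⟩
      · exact absurd h1 hp.2
      · rw [Prod.ext_iff]; exact ⟨h1, h2⟩
    have himg : ∑ r ∈ s2.image (fun p : ℤ × ℤ => p.1 - p.2), ((T - |r|).toNat : ℤ)
        = ∑ p ∈ s2, ((T - |p.1 - p.2|).toNat : ℤ) :=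
      Finset.sum_image (fun x hx y hy h => hinj (by exact_mod_cast hx) (by exact_mod_cast hy) h)
    rw [← himg]
    set u := s2.image (fun p : ℤ × ℤ => p.1 - p.2) with hu
    calc ∑ r ∈ u, ((T - |r|).toNat : ℤ)
        = ∑ r ∈ u.filter (fun r => ((T - |r|).toNat : ℤ) ≠ 0), ((T - |r|).toNat : ℤ) :=
          (Finset.sum_filter_ne_zero u).symm
      _ ≤ ∑ r ∈ Finset.Icc (1 - T) (T - 1), ((T - |r|).toNat : ℤ) := by
          apply Finset.sum_le_sum_of_subset_of_nonneg
          · intro r hr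
            simp only [Finset.mem_filter] at hr
            have : (T - |r|).toNat ≠ 0 := by exact_mod_cast hr.2
            have h0 : 0 < T - |r| := by omega
            have := abs_nonneg r
            rcases abs_cases r with ⟨e1, e2⟩ | ⟨e1, e2⟩ <;>
              · rw [e1] at h0
                simp only [Finset.mem_Icc]
                omega
          · intro r _ _
            positivity
      _ = T * T := sum_h T hT
  exact add_le_add hdiag hoff
lemma key_ineq (A : Finset ℤ) (hA : A.Nonempty) (hS : IsSidon A) (T : ℤ) (hT : 1 ≤ T) :
    ((A.card : ℤ) * T) ^ 2 ≤ (diam A + T) * ((A.card : ℤ) * T + T * T) := by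
  have hmM : Amin A ≤ Amax A := amin_le hA (amax_mem hA)
  have hcs := sq_sum_le_card_mul_sum_sq (s := Finset.Icc (Amin A + 1) (Amax A + T))
    (f := fun i => (wc A T i : ℤ))
  rw [sum_wc A hA T hT] at hcs
  have hcard : ((Finset.Icc (Amin A + 1) (Amax A + T)).card : ℤ) = diam A + T := by
    rw [Int.card_Icc, diam]
    omega
  rw [hcard] at hcs
  calc ((A.card : ℤ) * T) ^ 2 ≤ (diam A + T) * ∑ i ∈ Finset.Icc (Amin A + 1) (Amax A + T),
        (wc A T i : ℤ) ^ 2 := hcs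
    _ ≤ (diam A + T) * ((A.card : ℤ) * T + T * T) := by
        apply mul_le_mul_of_nonneg_left (sum_wc_sq A hA hS T hT)
        rw [diam]; omega

/-- Every finite nonempty Sidon set `A` with `k = |A|` satisfies
`diam(A) ≥ k² − 2·k^{3/2} − O(k)`. -/
theorem diam_lower_bound :
    ∃ C : ℝ, 0 ≤ C ∧ ∀ A : Finset ℤ, A.Nonempty → IsSidon A →
      (diam A : ℝ) ≥ (A.card : ℝ) ^ 2 - 2 * (A.card : ℝ) ^ ((3 : ℝ) / 2)
        - C * (A.card : ℝ) := by
  refine ⟨1, zero_le_one, fun A hA hS => ?_⟩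
  set x : ℝ := (A.card : ℝ) with hxdef
  have hx1 : (1:ℝ) ≤ x := by
    have : 1 ≤ A.card := Finset.card_pos.2 hA
    rw [hxdef]
    exact_mod_cast this
  have hx0 : (0:ℝ) < x := lt_of_lt_of_le one_pos hx1
  set y : ℝ := x ^ ((3:ℝ)/2) with hydef
  have hy1 : (1:ℝ) ≤ y := Real.one_le_rpow hx1 (by norm_num)
  have hyy : y * y = x * x * x := by
    rw [hydef, ← Real.rpow_add hx0]
    norm_num
    ring
  set T : ℤ := ⌈y⌉ with hTdef
  have hyt : y ≤ (T:ℝ) := Int.le_ceil y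
  have ht2 : (T:ℝ) ≤ y + 1 := le_of_lt (Int.ceil_lt_add_one y)
  have hT1 : 1 ≤ T := by
    have : (1:ℝ) ≤ (T:ℝ) := le_trans hy1 hyt
    exact_mod_cast this
  have hkey := key_ineq A hA hS T hT1
  set t : ℝ := (T:ℝ) with htdef
  have ht0 : (0:ℝ) < t := lt_of_lt_of_le (lt_of_lt_of_le one_pos hy1) hyt
  set n : ℝ := (diam A : ℝ) with hndef
  have hn0 : (0:ℝ) ≤ n := by
    have : (0:ℤ) ≤ diam A := by
      have := amin_le hA (amax_mem hA)
      rw [diam]; omega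
    rw [hndef]
    exact_mod_cast this
  have h1 : (x * t) ^ 2 ≤ (n + t) * (x * t + t * t) := by
    have := hkey
    have hcast : (((A.card : ℤ) * T : ℤ) : ℝ) = x * t := by push_cast; rfl
    calc (x * t) ^ 2 = (((A.card : ℤ) * T : ℤ) : ℝ) ^ 2 := by rw [hcast]
      _ ≤ (((diam A + T) * ((A.card : ℤ) * T + T * T) : ℤ) : ℝ) := by
          exact_mod_cast this
      _ = (n + t) * (x * t + t * t) := by push_cast; ring
  have hxt : (0:ℝ) < x + t := by linarith
  have h2 : x ^ 2 * t ≤ (n + t) * (x + t) := by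
    have h1' : (x ^ 2 * t) * t ≤ ((n + t) * (x + t)) * t := by nlinarith [h1]
    exact le_of_mul_le_mul_right h1' ht0
  have goal' : n ≥ x ^ 2 - 2 * y - 1 * x := by
    nlinarith [h2, hyy, mul_nonneg (sub_nonneg.2 hyt) (by linarith : (0:ℝ) ≤ t + 1 - y),
      mul_nonneg (sub_nonneg.2 ht2) (by linarith : (0:ℝ) ≤ t - y + 1),
      mul_nonneg (mul_nonneg hx0.le (by linarith : (0:ℝ) ≤ y - 1)) hxt.le,
      mul_pos hx0 ht0, mul_pos hxt ht0]
  calc (diam A : ℝ) = n := rfl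
    _ ≥ x ^ 2 - 2 * y - 1 * x := goal'
end
end
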